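/- arXiv:1709.04858 — 6 statements merged into one kernel-verified Lean document; each statement's English description precedes it below -/
import Mathlib

section
/- For every s ∈ ℕ, the identity of polynomials F_s(z) = C_s · G_s(1−z) holds for all z ∈ ℂ, where C_s := Γ(1+s/2)Γ(1/2+s/2)/Γ(1/2+s). In particular, evaluating at z = 1, Σ_{n=0}^{⌊s/2⌋} β^s_n = Γ(1+s/2)Γ(1/2+s/2)/Γ(1/2+s). (Lemma 4.1, the terminating hypergeometric transformation ₂F₁(−s/2,(1−s)/2;1/2−s;z) = C_s · ₂F₁(−s/2,(1−s)/2;1;1−z).) -/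
noncomputable section

/-- Pochhammer (rising factorial) symbol `(a)_n` over ℝ. -/
def poch (a : ℝ) (n : ℕ) : ℝ := ∏ i ∈ Finset.range n, (a + i)

/-- Pochhammer (rising factorial) symbol `(a)_n` over ℂ. -/
def pochC (a : ℂ) (n : ℕ) : ℂ := ∏ i ∈ Finset.range n, (a + i)

/-- The coefficients `β^s_n`. -/
def beta (s n : ℕ) : ℝ :=
  (1 / (4 ^ n * (Nat.factorial n : ℝ))) *
    ((Nat.factorial s : ℝ) / (Nat.factorial (s - 2 * n) : ℝ)) *
    (1 / poch (1 / 2 - s) n)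

/-- `F_s(z) = Σ_{n=0}^{⌊s/2⌋} β^s_n zⁿ = ₂F₁(−s/2,(1−s)/2;1/2−s;z)`. -/
def F (s : ℕ) (z : ℂ) : ℂ := ∑ n ∈ Finset.range (s / 2 + 1), (beta s n : ℂ) * z ^ n

/-- `G_s(w) = Σ_{k=0}^{⌊s/2⌋} ((−s/2)_k ((1−s)/2)_k /(k!)²) w^k = ₂F₁(−s/2,(1−s)/2;1;w)`. -/
def G (s : ℕ) (w : ℂ) : ℂ :=
  ∑ k ∈ Finset.range (s / 2 + 1),
    pochC (-(s : ℂ) / 2) k * pochC ((1 - (s : ℂ)) / 2) k / (Nat.factorial k : ℂ) ^ 2 * w ^ k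

/-- `C_s = Γ(1+s/2)Γ(1/2+s/2)/Γ(1/2+s)`. -/
def C (s : ℕ) : ℝ :=
  Real.Gamma (1 + (s : ℝ) / 2) * Real.Gamma (1 / 2 + (s : ℝ) / 2) / Real.Gamma (1 / 2 + (s : ℝ))


open Finset

lemma pochC_zero (a : ℂ) : pochC a 0 = 1 := by simp [pochC]

lemma pochC_succ (a : ℂ) (n : ℕ) : pochC a (n + 1) = pochC a n * (a + n) := by
  simp [pochC, prod_range_succ]

lemma pochC_succ' (a : ℂ) (n : ℕ) : pochC a (n + 1) = a * pochC (a + 1) n := by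
  unfold pochC
  rw [prod_range_succ']
  simp only [Nat.cast_zero, add_zero, Nat.cast_add, Nat.cast_one]
  rw [mul_comm]
  congr 1
  refine prod_congr rfl fun i _ => by push_cast; ring

lemma pochC_add (a : ℂ) (m n : ℕ) : pochC a (m + n) = pochC a m * pochC (a + m) n := by
  unfold pochC
  rw [prod_range_add]
  congr 1
  refine prod_congr rfl fun i _ => by push_cast; ring

lemma pochC_reverse (a : ℂ) (n : ℕ) : pochC a n = (-1) ^ n * pochC (1 - a - n) n := by
  unfold pochC
  rw [← prod_range_reflect fun i => (a + i)]
  rw [show ((-1 : ℂ)) ^ n = ∏ _i ∈ range n, (-1 : ℂ) by simp, ← prod_mul_distrib]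
  refine prod_congr rfl fun i hi => ?_
  rw [mem_range] at hi
  have h1 : n - 1 - i = n - (1 + i) := by omega
  have h2 : 1 + i ≤ n := by omega
  rw [h1, Nat.cast_sub h2]
  push_cast
  ring

lemma pochC_factorial (n j : ℕ) : pochC ((n : ℂ) + 1) j * (n.factorial : ℂ) = ((n + j).factorial : ℂ) := by
  induction j with
  | zero => simp [pochC_zero]
  | succ j ih =>
    rw [pochC_succ, show n + (j+1) = (n+j) + 1 by ring, Nat.factorial_succ]
    push_cast
    linear_combination ((n : ℂ) + j + 1) * ih

lemma pochC_neg_nat (m j : ℕ) (h : j ≤ m) :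
    pochC (-(m : ℂ)) j * ((m - j).factorial : ℂ) = (-1) ^ j * (m.factorial : ℂ) := by
  induction j with
  | zero => simp [pochC_zero]
  | succ j ih =>
    have hj : j ≤ m := by omega
    have hk : 1 ≤ m - j := by omega
    have hms : m - j = (m - (j+1)) + 1 := by omega
    have hc : ((m - j : ℕ) : ℂ) = (m : ℂ) - j := by
      rw [Nat.cast_sub hj]
    have ih' := ih hj
    rw [hms, Nat.factorial_succ] at ih'
    rw [pochC_succ]
    push_cast at ih' ⊢
    have hc2 : ((m - (j+1) : ℕ) : ℂ) = (m : ℂ) - j - 1 := by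
      rw [Nat.cast_sub (by omega : j + 1 ≤ m)]; push_cast; ring
    rw [hc2] at ih'
    linear_combination -ih'

lemma poch_pos {x : ℝ} (hx : 0 < x) (n : ℕ) : 0 < poch x n := by
  unfold poch
  exact prod_pos fun i _ => by positivity

lemma poch_cast (a : ℝ) (n : ℕ) : ((poch a n : ℝ) : ℂ) = pochC (a : ℂ) n := by
  unfold poch pochC
  push_cast
  rfl

lemma CV (b : ℂ) : ∀ (N : ℕ) (c : ℂ),
    ∑ j ∈ range (N + 1), (-1 : ℂ) ^ j * (N.choose j : ℂ) * pochC b j * pochC (c + j) (N - j)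
      = pochC (c - b) N := by
  intro N
  induction N with
  | zero => intro c; simp [pochC_zero]
  | succ N ih =>
    intro c
    rw [Finset.sum_range_succ' _ (N + 1)]
    push_cast
    simp only [add_zero, pow_zero, Nat.choose_zero_right, Nat.cast_one, pochC_zero, mul_one, one_mul]
    have hsplit : ∀ i ∈ range (N + 1),
        (-1 : ℂ) ^ (i+1) * ((N+1).choose (i+1) : ℂ) * pochC b (i+1) * pochC (c + ((i:ℂ) + 1)) (N - i)
        = (-1 : ℂ) ^ (i+1) * (N.choose (i+1) : ℂ) * pochC b (i+1) * pochC (c + ((i:ℂ)+1)) (N - i)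
          + (-1 : ℂ) ^ (i+1) * (N.choose i : ℂ) * pochC b (i+1) * pochC (c + ((i:ℂ)+1)) (N - i) := by
      intro i hi
      rw [Nat.choose_succ_succ]
      push_cast
      ring
    rw [sum_congr rfl hsplit, sum_add_distrib]
    have hA : (∑ i ∈ range (N+1), (-1 : ℂ) ^ (i+1) * (N.choose (i+1) : ℂ) * pochC b (i+1) * pochC (c + ((i:ℂ)+1)) (N - i))
        + pochC c (N + 1)
        = ∑ j ∈ range (N+1), (-1 : ℂ) ^ j * (N.choose j : ℂ) * pochC b j * pochC (c + j) (N + 1 - j) := by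
      have h := Finset.sum_range_succ' (fun j => (-1 : ℂ) ^ j * (N.choose j : ℂ) * pochC b j * pochC (c + j) (N + 1 - j)) (N + 1)
      rw [Finset.sum_range_succ] at h
      simp only [Nat.choose_succ_self, Nat.cast_zero, mul_zero, zero_mul, add_zero,
        Nat.choose_zero_right, Nat.cast_one, pochC_zero, mul_one, one_mul, pow_zero,
        Nat.sub_zero] at h
      push_cast at h
      exact h.symm
    -- rearrange: goal is  ΣtermA+termB  +  f0  = RHS
    have hcomb : (∑ i ∈ range (N+1), (-1:ℂ)^(i+1) * (N.choose (i+1) : ℂ) * pochC b (i+1) * pochC (c + ((i:ℂ)+1)) (N-i))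
        + (∑ i ∈ range (N+1), (-1:ℂ)^(i+1) * (N.choose i : ℂ) * pochC b (i+1) * pochC (c + ((i:ℂ)+1)) (N-i))
        + pochC c (N+1)
        = (∑ j ∈ range (N+1), (-1 : ℂ) ^ j * (N.choose j : ℂ) * pochC b j * pochC (c + j) (N + 1 - j))
          + ∑ i ∈ range (N+1), (-1:ℂ)^(i+1) * (N.choose i : ℂ) * pochC b (i+1) * pochC (c + ((i:ℂ)+1)) (N-i) := by
      rw [← hA]; ring
    rw [hcomb]
    -- now combine the two sums termwise using `key`
    rw [← sum_add_distrib]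
    have key : ∀ j ∈ range (N + 1),
        (-1 : ℂ) ^ j * (N.choose j : ℂ) * pochC b j * pochC (c + j) (N + 1 - j)
          + (-1 : ℂ) ^ (j+1) * (N.choose j : ℂ) * pochC b (j+1) * pochC (c + ((j:ℂ) + 1)) (N - j)
        = (c - b) * ((-1 : ℂ) ^ j * (N.choose j : ℂ) * pochC b j * pochC ((c+1) + j) (N - j)) := by
      intro j hj
      rw [mem_range] at hj
      have h1 : N + 1 - j = (N - j) + 1 := by omega
      rw [h1, pochC_succ' (c + j), pochC_succ b j]
      have h2 : c + (j:ℂ) + 1 = (c + 1) + j := by ring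
      rw [h2]
      ring
    rw [sum_congr rfl key, ← mul_sum, ih (c+1)]
    rw [show (c + 1 - b) = (c - b) + 1 by ring, ← pochC_succ']

lemma pochC_nat_ne (n j : ℕ) : pochC ((n : ℂ) + 1) j ≠ 0 := by
  intro h
  have h2 := pochC_factorial n j
  rw [h, zero_mul] at h2
  exact (Nat.cast_ne_zero.2 (Nat.factorial_ne_zero _)).symm (by exact_mod_cast h2)

lemma pochC_neg_nat' (N j : ℕ) (hj : j ≤ N) :
    pochC (-(N : ℂ)) j = (-1) ^ j * (N.choose j : ℂ) * (j.factorial : ℂ) := by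
  have e5 := pochC_neg_nat N j hj
  have e7 : (N.choose j) * (j.factorial * (N-j).factorial) = N.factorial := by
    have := Nat.choose_mul_factorial_mul_factorial hj
    rw [← this]; ring
  have hne : ((N - j).factorial : ℂ) ≠ 0 := Nat.cast_ne_zero.2 (Nat.factorial_ne_zero _)
  apply mul_right_cancel₀ hne
  rw [e5]
  have : ((N.factorial : ℕ) : ℂ) = (N.choose j : ℂ) * ((j.factorial : ℂ) * ((N-j).factorial : ℂ)) := by
    exact_mod_cast congrArg (Nat.cast : ℕ → ℂ) e7.symm
  rw [this]; ring

lemma choose_poch (n j : ℕ) : ((n + j).choose n : ℂ) * (j.factorial : ℂ) = pochC ((n : ℂ) + 1) j := by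
  have e6 : ((n+j).choose n) * n.factorial * j.factorial = (n+j).factorial := by
    have := Nat.choose_mul_factorial_mul_factorial (Nat.le_add_right n j)
    simpa using this
  have hne : ((n.factorial : ℕ) : ℂ) ≠ 0 := Nat.cast_ne_zero.2 (Nat.factorial_ne_zero _)
  apply mul_right_cancel₀ hne
  rw [pochC_factorial]
  have := congrArg (Nat.cast : ℕ → ℂ) e6
  push_cast at this
  linear_combination this

lemma innerSumEval (m n : ℕ) (hn : n ≤ m) (B : ℂ) :
    ∑ j ∈ range (m - n + 1),
      ((n + j).choose n : ℂ) * (pochC (-(m : ℂ)) (n + j) * pochC B (n + j) / (((n + j).factorial : ℂ)) ^ 2)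
    = pochC (-(m : ℂ)) n * pochC B n * pochC (1 - B) (m - n)
        / (((n.factorial : ℂ)) ^ 2 * pochC ((n : ℂ) + 1) (m - n)) := by
  set N := m - n with hN
  have hD : (((n.factorial : ℂ)) ^ 2 * pochC ((n : ℂ) + 1) N) ≠ 0 :=
    mul_ne_zero (pow_ne_zero _ (Nat.cast_ne_zero.2 (Nat.factorial_ne_zero _))) (pochC_nat_ne n N)
  rw [eq_div_iff hD, sum_mul]
  have hterm : ∀ j ∈ range (N + 1),
      ((n + j).choose n : ℂ) * (pochC (-(m : ℂ)) (n + j) * pochC B (n + j) / (((n + j).factorial : ℂ)) ^ 2)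
        * (((n.factorial : ℂ)) ^ 2 * pochC ((n : ℂ) + 1) N)
      = pochC (-(m : ℂ)) n * pochC B n *
          ((-1 : ℂ) ^ j * (N.choose j : ℂ) * pochC (B + n) j * pochC (((n : ℂ) + 1) + j) (N - j)) := by
    intro j hj
    rw [mem_range] at hj
    have hj' : j ≤ N := by omega
    have e1 : pochC (-(m : ℂ)) (n + j) = pochC (-(m : ℂ)) n * pochC (-(N : ℂ)) j := by
      rw [pochC_add]
      congr 2
      rw [hN, Nat.cast_sub hn]; ring
    have e2 : pochC B (n + j) = pochC B n * pochC (B + n) j := pochC_add B n j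
    have e3 : (((n + j).factorial : ℕ) : ℂ) = pochC ((n : ℂ) + 1) j * (n.factorial : ℂ) :=
      (pochC_factorial n j).symm
    have e4 : pochC ((n : ℂ) + 1) N = pochC ((n : ℂ) + 1) j * pochC (((n : ℂ) + 1) + j) (N - j) := by
      rw [← pochC_add]
      congr 1
      omega
    rw [e1, e2, e3, e4, pochC_neg_nat' N j hj', ← choose_poch n j]
    have hne1 : ((n.factorial : ℕ) : ℂ) ≠ 0 := Nat.cast_ne_zero.2 (Nat.factorial_ne_zero _)
    have hne2 : ((j.factorial : ℕ) : ℂ) ≠ 0 := Nat.cast_ne_zero.2 (Nat.factorial_ne_zero _)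
    have hne3 : ((n + j).choose n : ℂ) ≠ 0 :=
      Nat.cast_ne_zero.2 (Nat.choose_pos (Nat.le_add_right n j)).ne'
    field_simp
  rw [sum_congr rfl hterm, ← mul_sum, CV (B + n) N ((n : ℂ) + 1),
    show ((n : ℂ) + 1 - (B + n)) = 1 - B by ring]

lemma poch_succ (a : ℝ) (n : ℕ) : poch a (n + 1) = poch a n * (a + n) := by
  simp [poch, prod_range_succ]

lemma poch_gamma (x : ℝ) (hx : 0 < x) (n : ℕ) :
    Real.Gamma (x + n) = poch x n * Real.Gamma x := by
  induction n with
  | zero => simp [poch]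
  | succ n ih =>
    have h1 : x + ((n + 1 : ℕ) : ℝ) = (x + n) + 1 := by push_cast; ring
    rw [h1, Real.Gamma_add_one (by positivity), ih, poch_succ]
    ring

lemma poch_half_ne (s n : ℕ) : poch (1 / 2 - (s : ℝ)) n ≠ 0 := by
  unfold poch
  refine prod_ne_zero_iff.2 fun i _ => ?_
  intro h
  have h2 : (2 * (i : ℝ) + 1) = 2 * s := by linarith
  have h3 : (2 * i + 1 : ℕ) = 2 * s := by exact_mod_cast h2
  omega

lemma pochC_half_ne (s n : ℕ) : pochC (1 / 2 - (s : ℂ)) n ≠ 0 := by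
  have := poch_half_ne s n
  have hc := poch_cast (1 / 2 - (s : ℝ)) n
  push_cast at hc
  rw [← hc]
  exact_mod_cast Complex.ofReal_ne_zero.2 this

lemma C_even (m : ℕ) : (C (2 * m) : ℝ) * poch ((m : ℝ) + 1 / 2) m = m.factorial := by
  unfold C
  have h1 : (1 : ℝ) + ((2 * m : ℕ) : ℝ) / 2 = (m : ℝ) + 1 := by push_cast; ring
  have h2 : (1 : ℝ) / 2 + ((2 * m : ℕ) : ℝ) / 2 = (m : ℝ) + 1 / 2 := by push_cast; ring
  have h3 : (1 : ℝ) / 2 + ((2 * m : ℕ) : ℝ) = ((m : ℝ) + 1 / 2) + m := by push_cast; ring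
  rw [h1, h2, h3, poch_gamma _ (by positivity) m, Real.Gamma_nat_eq_factorial]
  have hg : Real.Gamma ((m : ℝ) + 1 / 2) ≠ 0 := (Real.Gamma_pos_of_pos (by positivity)).ne'
  have hp : poch ((m : ℝ) + 1 / 2) m ≠ 0 := (poch_pos (by positivity) m).ne'
  have key : ∀ a b c : ℝ, b ≠ 0 → c ≠ 0 → a * b / (c * b) * c = a := by
    intros a b c hb hc; field_simp
  exact key _ _ _ hg hp

lemma C_odd (m : ℕ) : (C (2 * m + 1) : ℝ) * poch ((m : ℝ) + 3 / 2) m = m.factorial := by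
  unfold C
  have h1 : (1 : ℝ) + ((2 * m + 1 : ℕ) : ℝ) / 2 = (m : ℝ) + 3 / 2 := by push_cast; ring
  have h2 : (1 : ℝ) / 2 + ((2 * m + 1 : ℕ) : ℝ) / 2 = (m : ℝ) + 1 := by push_cast; ring
  have h3 : (1 : ℝ) / 2 + ((2 * m + 1 : ℕ) : ℝ) = ((m : ℝ) + 3 / 2) + m := by push_cast; ring
  rw [h1, h2, h3, poch_gamma _ (by positivity) m, Real.Gamma_nat_eq_factorial]
  have hg : Real.Gamma ((m : ℝ) + 3 / 2) ≠ 0 := (Real.Gamma_pos_of_pos (by positivity)).ne'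
  have hp : poch ((m : ℝ) + 3 / 2) m ≠ 0 := (poch_pos (by positivity) m).ne'
  have key : ∀ a b c : ℝ, b ≠ 0 → c ≠ 0 → b * a / (c * b) * c = a := by
    intros a b c hb hc; field_simp
  exact key _ _ _ hg hp

lemma beta_mul (s n : ℕ) :
    (beta s n : ℂ) * (4 ^ n * (n.factorial : ℂ) * ((s - 2 * n).factorial : ℂ) *
      pochC (1 / 2 - (s : ℂ)) n) = (s.factorial : ℂ) := by
  have hR : beta s n * (4 ^ n * (n.factorial : ℝ) * ((s - 2 * n).factorial : ℝ) *
      poch (1 / 2 - (s : ℝ)) n) = (s.factorial : ℝ) := by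
    unfold beta
    have h1 : (4 : ℝ) ^ n ≠ 0 := by positivity
    have h2 : ((n.factorial : ℕ) : ℝ) ≠ 0 := Nat.cast_ne_zero.2 (Nat.factorial_ne_zero _)
    have h3 : (((s - 2 * n).factorial : ℕ) : ℝ) ≠ 0 := Nat.cast_ne_zero.2 (Nat.factorial_ne_zero _)
    have h4 := poch_half_ne s n
    have key : ∀ a b c p q : ℝ, a ≠ 0 → b ≠ 0 → c ≠ 0 → p ≠ 0 →
        1 / (a * b) * (q / c) * (1 / p) * (a * b * c * p) = q := by
      intros a b c p q ha hb hc hp; field_simp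
    exact key _ _ _ _ _ h1 h2 h3 h4
  have hcast := congrArg Complex.ofReal hR
  push_cast [poch_cast] at hcast
  linear_combination hcast

lemma P_even (m : ℕ) : ∀ n, n ≤ m →
    ((2 * m).factorial : ℂ) * ((m - n).factorial : ℂ)
      = (-1) ^ n * (m.factorial : ℂ) * pochC (1 / 2 - (m : ℂ)) n * 4 ^ n *
        ((2 * m - 2 * n).factorial : ℂ) := by
  intro n
  induction n with
  | zero => intro _; simp [pochC]; ring
  | succ n ih =>
    intro hn1
    have hn : n ≤ m := by omega
    have ih' := ih hn
    have hc1 : ((m - n : ℕ) : ℂ) = (m : ℂ) - n := by rw [Nat.cast_sub hn]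
    have hfac1 : ((m - n).factorial : ℂ) = ((m : ℂ) - n) * ((m - (n + 1)).factorial : ℂ) := by
      have h : m - n = (m - (n + 1)) + 1 := by omega
      rw [h, Nat.factorial_succ]
      push_cast [Nat.cast_sub hn1]
      ring
    have hfac2 : ((2 * m - 2 * n).factorial : ℂ)
        = (2 * ((m : ℂ) - n)) * (2 * ((m : ℂ) - n) - 1) * ((2 * m - 2 * (n + 1)).factorial : ℂ) := by
      have h : 2 * m - 2 * n = (2 * m - 2 * (n + 1)) + 1 + 1 := by omega
      rw [h, Nat.factorial_succ, Nat.factorial_succ]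
      have hc : ((2 * m - 2 * (n + 1) : ℕ) : ℂ) = 2 * (m : ℂ) - 2 * n - 2 := by
        rw [Nat.cast_sub (by omega : 2 * (n + 1) ≤ 2 * m)]; push_cast; ring
      push_cast [hc]; ring
    rw [hfac1, hfac2] at ih'
    rw [pochC_succ]
    have hmn : ((m : ℂ) - n) ≠ 0 := by
      rw [← hc1]
      exact Nat.cast_ne_zero.2 (by omega)
    apply mul_left_cancel₀ hmn
    push_cast at ih' ⊢
    linear_combination ih'

lemma P_odd (m : ℕ) : ∀ n, n ≤ m →
    ((2 * m + 1).factorial : ℂ) * ((m - n).factorial : ℂ)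
      = (-1) ^ n * (m.factorial : ℂ) * pochC (-(m : ℂ) - 1 / 2) n * 4 ^ n *
        ((2 * m + 1 - 2 * n).factorial : ℂ) := by
  intro n
  induction n with
  | zero => intro _; simp [pochC]; ring
  | succ n ih =>
    intro hn1
    have hn : n ≤ m := by omega
    have ih' := ih hn
    have hc1 : ((m - n : ℕ) : ℂ) = (m : ℂ) - n := by rw [Nat.cast_sub hn]
    have hfac1 : ((m - n).factorial : ℂ) = ((m : ℂ) - n) * ((m - (n + 1)).factorial : ℂ) := by
      have h : m - n = (m - (n + 1)) + 1 := by omega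
      rw [h, Nat.factorial_succ]
      push_cast [Nat.cast_sub hn1]
      ring
    have hfac2 : ((2 * m + 1 - 2 * n).factorial : ℂ)
        = (2 * ((m : ℂ) - n) + 1) * (2 * ((m : ℂ) - n)) * ((2 * m + 1 - 2 * (n + 1)).factorial : ℂ) := by
      have h : 2 * m + 1 - 2 * n = (2 * m + 1 - 2 * (n + 1)) + 1 + 1 := by omega
      rw [h, Nat.factorial_succ, Nat.factorial_succ]
      have hc : ((2 * m + 1 - 2 * (n + 1) : ℕ) : ℂ) = 2 * (m : ℂ) - 2 * n - 1 := by
        rw [Nat.cast_sub (by omega : 2 * (n + 1) ≤ 2 * m + 1)]; push_cast; ring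
      push_cast [hc]; ring
    rw [hfac1, hfac2] at ih'
    rw [pochC_succ]
    have hmn : ((m : ℂ) - n) ≠ 0 := by
      rw [← hc1]
      exact Nat.cast_ne_zero.2 (by omega)
    apply mul_left_cancel₀ hmn
    push_cast at ih' ⊢
    linear_combination ih'

lemma fieldKey (f2m fm fn fmn F2 T1 T2 p e : ℂ)
    (h1 : fn ≠ 0) (h2 : fm ≠ 0) (h3 : fmn ≠ 0) (h4 : F2 ≠ 0) (h5 : T1 ≠ 0) (h6 : T2 ≠ 0)
    (h7 : p ≠ 0) (he : e = 1 ∨ e = -1) :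
    f2m / (p * fn * F2 * T1)
      = fm / (T2 * (e * T1)) *
        (e * (e * fm / fmn * (f2m * fmn / (e * fm * p * F2)) * T2 / (fn ^ 2 * (fm / fn)))) := by
  rcases he with rfl | rfl <;>
    simp only [one_mul, mul_one, neg_mul, mul_neg, neg_neg, neg_div, div_neg,
      div_mul_div_comm, mul_div_assoc', div_div, div_mul_eq_mul_div] <;>
    rw [div_eq_div_iff (by simp [h1, h4, h5, h7]) (by simp [h1, h2, h3, h4, h5, h6, h7])] <;>
    field_simp <;>
    ring

set_option maxHeartbeats 1000000 in
lemma coeff_eq (s n : ℕ) (hn : n ≤ s / 2) :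
    (beta s n : ℂ) = (C s : ℂ) * ((-1) ^ n *
      ∑ k ∈ Icc n (s / 2), (k.choose n : ℂ) *
        (pochC (-(s : ℂ) / 2) k * pochC ((1 - (s : ℂ)) / 2) k / ((k.factorial : ℂ)) ^ 2)) := by
  rw [← Finset.Ico_add_one_right_eq_Icc, Finset.sum_Ico_eq_sum_range]
  rcases Nat.even_or_odd s with ⟨m, hm⟩ | ⟨m, hm⟩
  · -- even case, s = 2 * m
    have hs : s = 2 * m := by omega
    subst hs
    have hn' : n ≤ m := by omega
    have hdiv : 2 * m / 2 = m := by omega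
    rw [hdiv, show m + 1 - n = m - n + 1 from by omega]
    have hcast : ((2 * m : ℕ) : ℂ) = 2 * (m : ℂ) := by push_cast; ring
    rw [hcast, show -(2 * (m : ℂ)) / 2 = -(m : ℂ) from by ring,
      show (1 - 2 * (m : ℂ)) / 2 = 1 / 2 - (m : ℂ) from by ring]
    rw [innerSumEval m n hn' (1 / 2 - (m : ℂ))]
    rw [show (1 : ℂ) - (1 / 2 - (m : ℂ)) = (m : ℂ) + 1 / 2 from by ring]
    -- abbreviations / facts
    have hC : (C (2 * m) : ℂ) * pochC ((m : ℂ) + 1 / 2) m = (m.factorial : ℂ) := by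
      have := congrArg Complex.ofReal (C_even m)
      push_cast [poch_cast] at this
      exact this
    have hsplitC : pochC ((m : ℂ) + 1 / 2) m
        = pochC ((m : ℂ) + 1 / 2) (m - n) * pochC ((m : ℂ) + 1 / 2 + ((m - n : ℕ) : ℂ)) n := by
      rw [← pochC_add]
      congr 1
      omega
    have hrev : pochC ((m : ℂ) + 1 / 2 + ((m - n : ℕ) : ℂ)) n
        = (-1) ^ n * pochC (1 / 2 - 2 * (m : ℂ)) n := by
      rw [pochC_reverse ((m : ℂ) + 1 / 2 + ((m - n : ℕ) : ℂ)) n]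
      congr 2
      rw [Nat.cast_sub hn']
      ring
    have hbeta := beta_mul (2 * m) n
    rw [hcast] at hbeta
    have hP := P_even m n hn'
    have hfactEq : pochC ((n : ℂ) + 1) (m - n) * (n.factorial : ℂ) = (m.factorial : ℂ) := by
      have h := pochC_factorial n (m - n)
      rwa [show n + (m - n) = m from by omega] at h
    have hneg := pochC_neg_nat m n hn'
    -- nonzeroness
    have hT1 : pochC (1 / 2 - 2 * (m : ℂ)) n ≠ 0 := by
      have := pochC_half_ne (2 * m) n
      rwa [hcast] at this
    have hT2 : pochC ((m : ℂ) + 1 / 2) (m - n) ≠ 0 := by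
      have hpr : poch ((m : ℝ) + 1 / 2) (m - n) ≠ 0 := (poch_pos (by positivity) _).ne'
      have hc := poch_cast ((m : ℝ) + 1 / 2) (m - n)
      push_cast at hc
      rw [← hc]
      exact Complex.ofReal_ne_zero.2 hpr
    have hfn : ((n.factorial : ℕ) : ℂ) ≠ 0 := Nat.cast_ne_zero.2 (Nat.factorial_ne_zero _)
    have hfm : ((m.factorial : ℕ) : ℂ) ≠ 0 := Nat.cast_ne_zero.2 (Nat.factorial_ne_zero _)
    have hfmn : (((m - n).factorial : ℕ) : ℂ) ≠ 0 := Nat.cast_ne_zero.2 (Nat.factorial_ne_zero _)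
    have hF2 : (((2 * m - 2 * n).factorial : ℕ) : ℂ) ≠ 0 := Nat.cast_ne_zero.2 (Nat.factorial_ne_zero _)
    have h4 : (4 : ℂ) ^ n ≠ 0 := pow_ne_zero _ (by norm_num)
    have hsgn : ((-1 : ℂ)) ^ n ≠ 0 := by
      apply pow_ne_zero; norm_num
    -- solved forms
    have eBeta : (beta (2 * m) n : ℂ)
        = ((2 * m).factorial : ℂ) / (4 ^ n * (n.factorial : ℂ) * ((2 * m - 2 * n).factorial : ℂ) *
            pochC (1 / 2 - 2 * (m : ℂ)) n) := by
      rw [eq_div_iff (by exact mul_ne_zero (mul_ne_zero (mul_ne_zero h4 hfn) hF2) hT1)]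
      exact hbeta
    have eC : (C (2 * m) : ℂ)
        = (m.factorial : ℂ) / (pochC ((m : ℂ) + 1 / 2) (m - n) * ((-1) ^ n * pochC (1 / 2 - 2 * (m : ℂ)) n)) := by
      rw [eq_div_iff (mul_ne_zero hT2 (mul_ne_zero hsgn hT1))]
      rw [← hC, hsplitC, hrev]
    have eT3 : pochC (-(m : ℂ)) n = (-1) ^ n * (m.factorial : ℂ) / (((m - n).factorial : ℕ) : ℂ) := by
      rw [eq_div_iff hfmn]
      exact hneg
    have eT5 : pochC ((n : ℂ) + 1) (m - n) = (m.factorial : ℂ) / (n.factorial : ℂ) := by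
      rw [eq_div_iff hfn]
      exact hfactEq
    have eT4 : pochC (1 / 2 - (m : ℂ)) n
        = ((2 * m).factorial : ℂ) * ((m - n).factorial : ℂ)
          / ((-1) ^ n * (m.factorial : ℂ) * 4 ^ n * ((2 * m - 2 * n).factorial : ℂ)) := by
      rw [eq_div_iff (mul_ne_zero (mul_ne_zero (mul_ne_zero hsgn hfm) h4) hF2)]
      linear_combination -hP
    rw [eBeta, eC, eT3, eT4, eT5]
    exact fieldKey _ _ _ _ _ _ _ _ _ hfn hfm hfmn hF2 hT1 hT2 h4
      (by rcases Nat.even_or_odd n with h | h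
          exacts [Or.inl h.neg_one_pow, Or.inr h.neg_one_pow])
  · -- odd case, s = 2 * m + 1
    have hs : s = 2 * m + 1 := hm
    subst hs
    have hn' : n ≤ m := by omega
    have hdiv : (2 * m + 1) / 2 = m := by omega
    rw [hdiv, show m + 1 - n = m - n + 1 from by omega]
    have hcast : ((2 * m + 1 : ℕ) : ℂ) = 2 * (m : ℂ) + 1 := by push_cast; ring
    rw [hcast, show -(2 * (m : ℂ) + 1) / 2 = -(m : ℂ) - 1 / 2 from by ring,
      show (1 - (2 * (m : ℂ) + 1)) / 2 = -(m : ℂ) from by ring]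
    have hswap : ∀ j ∈ range (m - n + 1),
        ((n + j).choose n : ℂ) *
          (pochC (-(m : ℂ) - 1 / 2) (n + j) * pochC (-(m : ℂ)) (n + j) / (((n + j).factorial : ℂ)) ^ 2)
        = ((n + j).choose n : ℂ) *
          (pochC (-(m : ℂ)) (n + j) * pochC (-(m : ℂ) - 1 / 2) (n + j) / (((n + j).factorial : ℂ)) ^ 2) := by
      intro j _
      ring
    rw [sum_congr rfl hswap, innerSumEval m n hn' (-(m : ℂ) - 1 / 2)]
    rw [show (1 : ℂ) - (-(m : ℂ) - 1 / 2) = (m : ℂ) + 3 / 2 from by ring]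
    have hC : (C (2 * m + 1) : ℂ) * pochC ((m : ℂ) + 3 / 2) m = (m.factorial : ℂ) := by
      have := congrArg Complex.ofReal (C_odd m)
      push_cast [poch_cast] at this
      exact this
    have hsplitC : pochC ((m : ℂ) + 3 / 2) m
        = pochC ((m : ℂ) + 3 / 2) (m - n) * pochC ((m : ℂ) + 3 / 2 + ((m - n : ℕ) : ℂ)) n := by
      rw [← pochC_add]
      congr 1
      omega
    have hrev : pochC ((m : ℂ) + 3 / 2 + ((m - n : ℕ) : ℂ)) n
        = (-1) ^ n * pochC (1 / 2 - (2 * (m : ℂ) + 1)) n := by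
      rw [pochC_reverse ((m : ℂ) + 3 / 2 + ((m - n : ℕ) : ℂ)) n]
      congr 2
      rw [Nat.cast_sub hn']
      ring
    have hbeta := beta_mul (2 * m + 1) n
    rw [hcast] at hbeta
    have hP := P_odd m n hn'
    have hfactEq : pochC ((n : ℂ) + 1) (m - n) * (n.factorial : ℂ) = (m.factorial : ℂ) := by
      have h := pochC_factorial n (m - n)
      rwa [show n + (m - n) = m from by omega] at h
    have hneg := pochC_neg_nat m n hn'
    have hT1 : pochC (1 / 2 - (2 * (m : ℂ) + 1)) n ≠ 0 := by
      have := pochC_half_ne (2 * m + 1) n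
      rwa [hcast] at this
    have hT2 : pochC ((m : ℂ) + 3 / 2) (m - n) ≠ 0 := by
      have hpr : poch ((m : ℝ) + 3 / 2) (m - n) ≠ 0 := (poch_pos (by positivity) _).ne'
      have hc := poch_cast ((m : ℝ) + 3 / 2) (m - n)
      push_cast at hc
      rw [← hc]
      exact Complex.ofReal_ne_zero.2 hpr
    have hfn : ((n.factorial : ℕ) : ℂ) ≠ 0 := Nat.cast_ne_zero.2 (Nat.factorial_ne_zero _)
    have hfm : ((m.factorial : ℕ) : ℂ) ≠ 0 := Nat.cast_ne_zero.2 (Nat.factorial_ne_zero _)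
    have hfmn : (((m - n).factorial : ℕ) : ℂ) ≠ 0 := Nat.cast_ne_zero.2 (Nat.factorial_ne_zero _)
    have hF2 : (((2 * m + 1 - 2 * n).factorial : ℕ) : ℂ) ≠ 0 := Nat.cast_ne_zero.2 (Nat.factorial_ne_zero _)
    have h4 : (4 : ℂ) ^ n ≠ 0 := pow_ne_zero _ (by norm_num)
    have hsgn : ((-1 : ℂ)) ^ n ≠ 0 := by
      apply pow_ne_zero; norm_num
    have eBeta : (beta (2 * m + 1) n : ℂ)
        = ((2 * m + 1).factorial : ℂ) / (4 ^ n * (n.factorial : ℂ) * ((2 * m + 1 - 2 * n).factorial : ℂ) *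
            pochC (1 / 2 - (2 * (m : ℂ) + 1)) n) := by
      rw [eq_div_iff (by exact mul_ne_zero (mul_ne_zero (mul_ne_zero h4 hfn) hF2) hT1)]
      exact hbeta
    have eC : (C (2 * m + 1) : ℂ)
        = (m.factorial : ℂ) / (pochC ((m : ℂ) + 3 / 2) (m - n) * ((-1) ^ n * pochC (1 / 2 - (2 * (m : ℂ) + 1)) n)) := by
      rw [eq_div_iff (mul_ne_zero hT2 (mul_ne_zero hsgn hT1))]
      rw [← hC, hsplitC, hrev]
    have eT3 : pochC (-(m : ℂ)) n = (-1) ^ n * (m.factorial : ℂ) / (((m - n).factorial : ℕ) : ℂ) := by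
      rw [eq_div_iff hfmn]
      exact hneg
    have eT5 : pochC ((n : ℂ) + 1) (m - n) = (m.factorial : ℂ) / (n.factorial : ℂ) := by
      rw [eq_div_iff hfn]
      exact hfactEq
    have eT4 : pochC (-(m : ℂ) - 1 / 2) n
        = ((2 * m + 1).factorial : ℂ) * ((m - n).factorial : ℂ)
          / ((-1) ^ n * (m.factorial : ℂ) * 4 ^ n * ((2 * m + 1 - 2 * n).factorial : ℂ)) := by
      rw [eq_div_iff (mul_ne_zero (mul_ne_zero (mul_ne_zero hsgn hfm) h4) hF2)]
      linear_combination -hP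
    rw [eBeta, eC, eT3, eT4, eT5]
    exact fieldKey _ _ _ _ _ _ _ _ _ hfn hfm hfmn hF2 hT1 hT2 h4
      (by rcases Nat.even_or_odd n with h | h
          exacts [Or.inl h.neg_one_pow, Or.inr h.neg_one_pow])

/-- Lemma 4.1: the terminating hypergeometric transformation `F_s(z) = C_s·G_s(1−z)`,
and in particular `Σ_n β^s_n = C_s`. -/
theorem hypergeometric_transformation (s : ℕ) :
    (∀ z : ℂ, F s z = (C s : ℂ) * G s (1 - z)) ∧
      (∑ n ∈ Finset.range (s / 2 + 1), beta s n) = C s := by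
  have hmain : ∀ z : ℂ, F s z = (C s : ℂ) * G s (1 - z) := by
    intro z
    unfold F G
    rw [mul_sum]
    have hexp : ∀ k ∈ range (s / 2 + 1),
        (C s : ℂ) * (pochC (-(s : ℂ) / 2) k * pochC ((1 - (s : ℂ)) / 2) k / (Nat.factorial k : ℂ) ^ 2 * (1 - z) ^ k)
        = ∑ n ∈ range (k + 1),
            (C s : ℂ) * ((-1) ^ n * ((k.choose n : ℂ) *
              (pochC (-(s : ℂ) / 2) k * pochC ((1 - (s : ℂ)) / 2) k / ((k.factorial : ℂ)) ^ 2))) * z ^ n := by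
      intro k _
      rw [show (1 : ℂ) - z = -z + 1 from by ring, add_pow]
      simp only [Finset.mul_sum]
      refine sum_congr rfl fun n _ => ?_
      rw [neg_pow z n]
      simp only [one_pow, mul_one]
      ring
    rw [sum_congr rfl hexp]
    rw [Finset.sum_comm' (t' := range (s / 2 + 1)) (s' := fun n => Icc n (s / 2))
      (by intro k n; simp only [mem_range, mem_Icc]; omega)]
    refine sum_congr rfl fun n hn => ?_
    rw [mem_range] at hn
    have hn' : n ≤ s / 2 := by omega
    rw [coeff_eq s n hn']
    simp only [Finset.mul_sum, Finset.sum_mul]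
  refine ⟨hmain, ?_⟩
  have hG0 : G s 0 = 1 := by
    unfold G
    rw [Finset.sum_eq_single_of_mem 0 (by simp)]
    · simp [pochC]
    · intro k _ hk
      simp [zero_pow hk]
  have h1 := hmain 1
  rw [show (1 : ℂ) - 1 = 0 from by ring, hG0, mul_one] at h1
  have h2 : ((∑ n ∈ Finset.range (s / 2 + 1), beta s n : ℝ) : ℂ) = ((C s : ℝ) : ℂ) := by
    rw [← h1]
    unfold F
    push_cast
    simp
  exact_mod_cast h2
end
end

section
/- Let κ ≥ 0. Let p ∈ ℝ⁴ with p ≠ 0, ⟨p,p⟩ = 0 and p⁰ > 0. Let w ∈ ℝ⁴ with ⟨p,w⟩ = 0 and ⟨w,w⟩ = −κ². Let e = e' + i e'' ∈ ℂ⁴ with ⟨e,e⟩ = −1 (ℂ-bilinear extension), e''⁰ > 0 and ⟨e'',e''⟩ > 0 (i.e. e lies in the tube T₊). Then ⟨e,p⟩ ≠ 0 (indeed Im⟨e,p⟩ = ⟨e'',p⟩ > 0), and |exp(−i·⟨e,w⟩/⟨e,p⟩)| ≤ |exp(i·κ/⟨e,p⟩)|. (Proposition 2.1: the bound on the infinite-spin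 intertwiner exp(−i(eE_p(k))/(ep)) in the tube, which makes the standard intertwiner u^{κ(0)} = exp(−iκ√(−e²)/(ep))·exp(−i(eE_p(k))/(ep)) bounded by 1 there.) -/
noncomputable section

/-- Minkowski bilinear form on ℝ⁴. -/
def mink (a b : Fin 4 → ℝ) : ℝ := a 0 * b 0 - a 1 * b 1 - a 2 * b 2 - a 3 * b 3

/-- Minkowski bilinear form, ℂ-bilinearly extended to ℂ⁴. -/
def minkC (a b : Fin 4 → ℂ) : ℂ := a 0 * b 0 - a 1 * b 1 - a 2 * b 2 - a 3 * b 3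

/-!
Write `e = a + i b`. Then `⟨e,e⟩ = -1` means `⟨a,a⟩ = ⟨b,b⟩ - 1` and `⟨a,b⟩ = 0`, and
`Im⟨e,p⟩ = ⟨b,p⟩ > 0` because `b` is future timelike and `p` future lightlike. Comparing real
parts of the exponents, the bound reduces to `-⟨v,w⟩ ≤ κ ⟨b,p⟩` for `v = ⟨b,p⟩ a - ⟨a,p⟩ b`.
Both `v` and `w` lie in `p^⊥`, on which the Minkowski form is negative semidefinite, so the
Cauchy–Schwarz inequality holds there and gives `⟨v,w⟩² ≤ κ² (-⟨v,v⟩) ≤ κ² ⟨b,p⟩²`.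
-/

lemma mink_self_nonpos_of_mink_eq_zero {p u : Fin 4 → ℝ} (hpp : mink p p = 0) (hp0 : p 0 ≠ 0)
    (hpu : mink p u = 0) : mink u u ≤ 0 := by
  simp only [mink] at *
  have hcs : (p 0 * u 0) ^ 2 ≤ (p 1 ^ 2 + p 2 ^ 2 + p 3 ^ 2) * (u 1 ^ 2 + u 2 ^ 2 + u 3 ^ 2) := by
    rw [show p 0 * u 0 = p 1 * u 1 + p 2 * u 2 + p 3 * u 3 by linarith]
    nlinarith [sq_nonneg (p 1 * u 2 - p 2 * u 1), sq_nonneg (p 1 * u 3 - p 3 * u 1),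
      sq_nonneg (p 2 * u 3 - p 3 * u 2)]
  nlinarith [sq_pos_of_ne_zero hp0]

lemma sq_mink_le_of_mink_eq_zero {p u v : Fin 4 → ℝ} (hpp : mink p p = 0) (hp0 : p 0 ≠ 0)
    (hpu : mink p u = 0) (hpv : mink p v = 0) :
    mink u v ^ 2 ≤ mink u u * mink v v := by
  have hquad : ∀ t : ℝ, mink v v * (t * t) + 2 * mink u v * t + mink u u ≤ 0 := by
    intro t
    have hpu' : mink p (fun i => u i + t * v i) = 0 := by
      have : mink p (fun i => u i + t * v i) = mink p u + t * mink p v := by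
        simp only [mink]; ring
      rw [this, hpu, hpv, mul_zero, add_zero]
    have := mink_self_nonpos_of_mink_eq_zero hpp hp0 hpu'
    simp only [mink] at this ⊢
    linarith
  have := discrim_le_zero_of_nonpos hquad
  rw [discrim] at this
  linarith

lemma mink_pos_of_timelike_of_lightlike {b p : Fin 4 → ℝ} (hb0 : 0 < b 0) (hbb : 0 < mink b b)
    (hp0 : 0 < p 0) (hpp : mink p p = 0) : 0 < mink b p := by
  simp only [mink] at *
  have hcs : (b 1 * p 1 + b 2 * p 2 + b 3 * p 3) ^ 2
      ≤ (b 1 ^ 2 + b 2 ^ 2 + b 3 ^ 2) * (p 1 ^ 2 + p 2 ^ 2 + p 3 ^ 2) := by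
    nlinarith [sq_nonneg (b 1 * p 2 - b 2 * p 1), sq_nonneg (b 1 * p 3 - b 3 * p 1),
      sq_nonneg (b 2 * p 3 - b 3 * p 2)]
  nlinarith [mul_pos hb0 hp0, mul_pos hp0 hp0, mul_pos hb0 hb0]

lemma mink_cross_le {a b p w : Fin 4 → ℝ} {κ : ℝ} (hκ : 0 ≤ κ)
    (hpp : mink p p = 0) (hp0 : p 0 ≠ 0) (hpw : mink p w = 0) (hww : mink w w = -κ ^ 2)
    (haa : mink a a = mink b b - 1) (hab : mink a b = 0) (hbb : 0 ≤ mink b b)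
    (hbp : 0 ≤ mink b p) :
    mink b w * mink a p - mink a w * mink b p ≤ κ * mink b p := by
  set v : Fin 4 → ℝ := fun i => mink b p * a i - mink a p * b i
  have hpv : mink p v = 0 := by simp only [v, mink]; ring
  have hvw : mink v w = mink b p * mink a w - mink a p * mink b w := by simp only [v, mink]; ring
  have hvv : -mink v v ≤ mink b p ^ 2 := by
    have : mink v v = mink b p ^ 2 * mink a a - 2 * mink b p * mink a p * mink a b
        + mink a p ^ 2 * mink b b := by simp only [v, mink]; ring
    rw [this, haa, hab]
    nlinarith [mul_nonneg hbb (add_nonneg (sq_nonneg (mink b p)) (sq_nonneg (mink a p)))]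
  have hsq : mink v w ^ 2 ≤ (κ * mink b p) ^ 2 := by
    have := sq_mink_le_of_mink_eq_zero hpp hp0 hpv hpw
    rw [hww] at this
    nlinarith [mul_le_mul_of_nonneg_left hvv (sq_nonneg κ)]
  linarith [(abs_le_of_sq_le_sq' hsq (mul_nonneg hκ hbp)).1]

lemma re_minkC_ofReal (e : Fin 4 → ℂ) (x : Fin 4 → ℝ) :
    (minkC e fun i => (x i : ℂ)).re = mink (fun i => (e i).re) x := by
  simp [minkC, mink, Complex.mul_re]

lemma im_minkC_ofReal (e : Fin 4 → ℂ) (x : Fin 4 → ℝ) :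
    (minkC e fun i => (x i : ℂ)).im = mink (fun i => (e i).im) x := by
  simp [minkC, mink, Complex.mul_im]

lemma re_minkC_self (e : Fin 4 → ℂ) :
    (minkC e e).re = mink (fun i => (e i).re) (fun i => (e i).re)
      - mink (fun i => (e i).im) (fun i => (e i).im) := by
  simp only [minkC, mink, Complex.sub_re, Complex.mul_re]; ring

lemma im_minkC_self (e : Fin 4 → ℂ) :
    (minkC e e).im = 2 * mink (fun i => (e i).re) (fun i => (e i).im) := by
  simp only [minkC, mink, Complex.sub_im, Complex.mul_im]; ring

/-- For `q = 0` both sides are `1`, by the convention `z / 0 = 0`. -/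
lemma norm_exp_neg_I_mul_div_le (z q : ℂ) (κ : ℝ) (h : z.im * q.re - z.re * q.im ≤ κ * q.im) :
    ‖Complex.exp (-Complex.I * z / q)‖ ≤ ‖Complex.exp (Complex.I * κ / q)‖ := by
  rw [Complex.norm_exp, Complex.norm_exp, Real.exp_le_exp, Complex.div_re, Complex.div_re]
  simp only [Complex.mul_re, Complex.mul_im, Complex.neg_re, Complex.neg_im, Complex.I_re,
    Complex.I_im, Complex.ofReal_re, Complex.ofReal_im]
  rw [← add_div, ← add_div]
  exact div_le_div_of_nonneg_right (by linarith) (Complex.normSq_nonneg q)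

theorem intertwiner_bound_in_tube_general (κ : ℝ) (hκ : 0 ≤ κ)
    (p : Fin 4 → ℝ) (hpp : mink p p = 0) (hppos : 0 < p 0)
    (w : Fin 4 → ℝ) (hpw : mink p w = 0) (hww : mink w w = -κ ^ 2)
    (e : Fin 4 → ℂ) (hee : minkC e e = -1)
    (he''0 : 0 < (e 0).im)
    (he'' : 0 < mink (fun i => (e i).im) (fun i => (e i).im)) :
    minkC e (fun i => (p i : ℂ)) ≠ 0 ∧
      (minkC e (fun i => (p i : ℂ))).im = mink (fun i => (e i).im) p ∧
      0 < (minkC e (fun i => (p i : ℂ))).im ∧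
      ‖(Complex.exp (-Complex.I * minkC e (fun i => (w i : ℂ)) /
            minkC e (fun i => (p i : ℂ))))‖ ≤
        ‖Complex.exp (Complex.I * (κ : ℂ) / minkC e (fun i => (p i : ℂ)))‖ := by
  have hbp := mink_pos_of_timelike_of_lightlike he''0 he'' hppos hpp
  have hep_im := im_minkC_ofReal e p
  have haa : mink (fun i => (e i).re) (fun i => (e i).re)
      = mink (fun i => (e i).im) (fun i => (e i).im) - 1 := by
    have := re_minkC_self e; rw [hee] at this; norm_num at this; linarith
  have hab : mink (fun i => (e i).re) (fun i => (e i).im) = 0 := by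
    have := im_minkC_self e; rw [hee] at this; norm_num at this; linarith
  refine ⟨fun h => by simp [h] at hep_im; linarith, hep_im, hep_im ▸ hbp, ?_⟩
  apply norm_exp_neg_I_mul_div_le
  rw [re_minkC_ofReal, re_minkC_ofReal, im_minkC_ofReal, hep_im]
  exact mink_cross_le hκ hpp hppos.ne' hpw hww haa hab he''.le hbp.le

/-- Proposition 2.1: the bound on the infinite-spin intertwiner in the tube `T₊`. -/
theorem intertwiner_bound_in_tube (κ : ℝ) (hκ : 0 ≤ κ)
    (p : Fin 4 → ℝ) (hp0 : p ≠ 0) (hpp : mink p p = 0) (hppos : 0 < p 0)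
    (w : Fin 4 → ℝ) (hpw : mink p w = 0) (hww : mink w w = -κ ^ 2)
    (e : Fin 4 → ℂ) (hee : minkC e e = -1)
    (he''0 : 0 < (e 0).im)
    (he'' : 0 < mink (fun i => (e i).im) (fun i => (e i).im)) :
    minkC e (fun i => (p i : ℂ)) ≠ 0 ∧
      (minkC e (fun i => (p i : ℂ))).im = mink (fun i => (e i).im) p ∧
      0 < (minkC e (fun i => (p i : ℂ))).im ∧
      ‖(Complex.exp (-Complex.I * minkC e (fun i => (w i : ℂ)) /
            minkC e (fun i => (p i : ℂ))))‖ ≤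
        ‖Complex.exp (Complex.I * (κ : ℂ) / minkC e (fun i => (p i : ℂ)))‖ :=
  intertwiner_bound_in_tube_general κ hκ p hpp hppos w hpw hww e hee he''0 he''
end
end

section
/- Let α', β', α'', β'' ∈ ℝ and f', f'' ∈ ℝ², and let κ ≥ 0 and k ∈ ℝ² with |k| = κ. Assume β'' > 0, f''·f'' < 2α''β'', 2α'β' − f'·f' − 2α''β'' + f''·f'' = −1, and f'·f'' = α'β'' + α''β'. Then (β'' f' − β' f'')·k ≤ κ β''. (The key inequality in the proof of Proposition 2.1, obtained via the Cauchy–Schwarz inequality and the constraints coming from e ∈ T₊ with e² = −1.) -/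
noncomputable section

/-- Euclidean inner product on ℝ². -/
def dot2 (a b : Fin 2 → ℝ) : ℝ := a 0 * b 0 + a 1 * b 1

/-- The key inequality in the proof of Proposition 2.1. -/
theorem key_inequality (α' β' α'' β'' : ℝ) (f' f'' : Fin 2 → ℝ)
    (κ : ℝ) (hκ : 0 ≤ κ) (k : Fin 2 → ℝ) (hk : Real.sqrt (dot2 k k) = κ)
    (hβ'' : 0 < β'')
    (hf'' : dot2 f'' f'' < 2 * α'' * β'')
    (hnorm : 2 * α' * β' - dot2 f' f' - 2 * α'' * β'' + dot2 f'' f'' = -1)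
    (horth : dot2 f' f'' = α' * β'' + α'' * β') :
    dot2 (fun i => β'' * f' i - β' * f'' i) k ≤ κ * β'' := by
  have hkk : dot2 k k = κ ^ 2 := by
    have h0 : 0 ≤ dot2 k k := by
      unfold dot2; nlinarith [sq_nonneg (k 0), sq_nonneg (k 1)]
    nlinarith [Real.sq_sqrt h0, hk]
  set v : Fin 2 → ℝ := fun i => β'' * f' i - β' * f'' i with hv
  have key : dot2 v v = β'' ^ 2 + (β' ^ 2 + β'' ^ 2) * (dot2 f'' f'' - 2 * α'' * β'') := by
    simp only [hv, dot2] at *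
    linear_combination (-(β'' ^ 2)) * hnorm - 2 * β' * β'' * horth
  have hvv : dot2 v v ≤ β'' ^ 2 := by
    nlinarith [key, mul_pos (by positivity : (0:ℝ) < β' ^ 2 + β'' ^ 2) (sub_pos.mpr hf'')]
  have hcs : (dot2 v k) ^ 2 ≤ dot2 v v * dot2 k k := by
    simp only [dot2]
    nlinarith [sq_nonneg (v 0 * k 1 - v 1 * k 0)]
  rcases le_or_gt (dot2 v k) 0 with h | h
  · exact h.trans (by positivity)
  · have hvv0 : 0 ≤ dot2 v v := by
      unfold dot2; nlinarith [sq_nonneg (v 0), sq_nonneg (v 1)]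
    nlinarith [hcs, hvv, hkk, mul_nonneg hκ hβ''.le, sq_nonneg (κ * β'' - dot2 v k)]
end
end

section
/- Let κ ≥ 0 and p, w ∈ ℝ⁴ with ⟨p,p⟩ = 0, ⟨p,w⟩ = 0 and ⟨w,w⟩ = −κ². On the open set Ω = {e ∈ ℝ⁴ : ⟨e,p⟩ ≠ 0} define the smooth function ũ(e) := exp(−i·⟨e,w⟩/⟨e,p⟩) ∈ ℂ. Then (i) the directional derivative of ũ along p vanishes: D_p ũ(e) = 0 for all e ∈ Ω; and (ii) ⟨e,p⟩² · □ũ(e) = κ² · ũ(e) for all e ∈ Ω, where □ := ∂²/∂(e⁰)² − ∂²/∂(e¹)² − ∂²/∂(e²)² − ∂²/∂(e³)² is the wave operator in the variable e. (The intertwiner identities (p∂_e)ũ = 0 and ((ep)²□_e − κ²)ũ = 0 proved for Proposition 2.2.) -/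
noncomputable section

/-- Directional derivative `D_v f(e) = (d/dt) f(e+tv)|_{t=0}`. -/
def Dv (v : Fin 4 → ℝ) (f : (Fin 4 → ℝ) → ℂ) (e : Fin 4 → ℝ) : ℂ :=
  deriv (fun t : ℝ => f (e + t • v)) 0

/-- Standard basis vector of ℝ⁴. -/
def bvec (μ : Fin 4) : Fin 4 → ℝ := fun i => if i = μ then 1 else 0

/-- The wave operator `□ = ∂²₀ − ∂²₁ − ∂²₂ − ∂²₃` in the variable `e`. -/
def box (f : (Fin 4 → ℝ) → ℂ) (e : Fin 4 → ℝ) : ℂ :=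
  Dv (bvec 0) (Dv (bvec 0) f) e - Dv (bvec 1) (Dv (bvec 1) f) e -
    Dv (bvec 2) (Dv (bvec 2) f) e - Dv (bvec 3) (Dv (bvec 3) f) e

/-! Along the line `e + t • v` the phase `⟨e,w⟩/⟨e,p⟩` is a Möbius function of `t` with
derivative `⟨v,G⟩/⟨e+tv,p⟩²`, where `G = ⟨e,p⟩ w - ⟨e,w⟩ p` and `⟨v,G⟩` is the same at every point
of the line. Differentiating once more, `D_v² ũ = ũ (-⟨v,G⟩² + 2i ⟨v,G⟩⟨v,p⟩⟨e,p⟩) / ⟨e,p⟩⁴`, and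
summing over the basis with the Minkowski signs turns `⟨v,G⟩²` and `⟨v,G⟩⟨v,p⟩` into `⟨G,G⟩` and
`⟨G,p⟩`. The null conditions on `p` and `w` give `⟨p,G⟩ = 0`, which is also `D_p ũ = 0`, and
`⟨G,G⟩ = -κ² ⟨e,p⟩²`. -/

open Complex Filter Topology

lemma hasDerivAt_div_affine (a b c d t : ℝ) (h : c + t * d ≠ 0) :
    HasDerivAt (fun s => (a + s * b) / (c + s * d)) ((b * c - a * d) / (c + t * d) ^ 2) t := by
  have hnum : HasDerivAt (fun s => a + s * b) b t := by
    simpa using ((hasDerivAt_id t).mul_const b).const_add a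
  have hden : HasDerivAt (fun s => c + s * d) d t := by
    simpa using ((hasDerivAt_id t).mul_const d).const_add c
  exact (hnum.div hden h).congr_deriv (by ring)

lemma mink_add_smul_left (e v b : Fin 4 → ℝ) (t : ℝ) :
    mink (e + t • v) b = mink e b + t * mink v b := by
  simp only [mink, Pi.add_apply, Pi.smul_apply, smul_eq_mul]
  ring

lemma mink_comm (a b : Fin 4 → ℝ) : mink a b = mink b a := by
  simp only [mink]
  ring

lemma mink_bvec_sum (x y : Fin 4 → ℝ) :
    mink (bvec 0) x * mink (bvec 0) y - mink (bvec 1) x * mink (bvec 1) y -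
      mink (bvec 2) x * mink (bvec 2) y - mink (bvec 3) x * mink (bvec 3) y = mink x y := by
  simp [mink, bvec]

/-- `mink e p ^ 2` times the Minkowski gradient of the phase `e ↦ mink e w / mink e p`. -/
def phaseGrad (w p e : Fin 4 → ℝ) : Fin 4 → ℝ := mink e p • w - mink e w • p

lemma mink_phaseGrad (v w p e : Fin 4 → ℝ) :
    mink v (phaseGrad w p e) = mink v w * mink e p - mink e w * mink v p := by
  simp only [phaseGrad, mink, Pi.sub_apply, Pi.smul_apply, smul_eq_mul]
  ring

lemma mink_phaseGrad_add_smul (v w p e : Fin 4 → ℝ) (t : ℝ) :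
    mink v (phaseGrad w p (e + t • v)) = mink v (phaseGrad w p e) := by
  simp only [mink_phaseGrad, mink_add_smul_left]
  ring

def intertwiner (w p e : Fin 4 → ℝ) : ℂ :=
  Complex.exp (-Complex.I * (mink e w : ℝ) / (mink e p : ℝ))

lemma hasDerivAt_intertwiner_line (v w p e : Fin 4 → ℝ) (t : ℝ) (h : mink (e + t • v) p ≠ 0) :
    HasDerivAt (fun s : ℝ => intertwiner w p (e + s • v))
      (intertwiner w p (e + t • v) *
        (-I * mink v (phaseGrad w p e) / (mink (e + t • v) p : ℂ) ^ 2)) t := by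
  have hphase := (hasDerivAt_div_affine (mink e w) (mink v w) (mink e p) (mink v p) t
    (by rwa [← mink_add_smul_left])).ofReal_comp.const_mul (-I) |>.cexp
  convert hphase using 1
  · funext s
    simp only [intertwiner, mink_add_smul_left]
    push_cast
    simp only [mul_div_assoc]
  · simp only [intertwiner, mink_add_smul_left, mink_phaseGrad]
    push_cast
    simp only [mul_div_assoc]

lemma Dv_intertwiner (v w p e : Fin 4 → ℝ) (h : mink e p ≠ 0) :
    Dv v (intertwiner w p) e =
      intertwiner w p e * (-I * mink v (phaseGrad w p e) / (mink e p : ℂ) ^ 2) := by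
  rw [Dv]
  simpa using (hasDerivAt_intertwiner_line v w p e 0 (by simpa using h)).deriv

lemma hasDerivAt_mink_line (v e p : Fin 4 → ℝ) (t : ℝ) :
    HasDerivAt (fun s : ℝ => (mink (e + s • v) p : ℂ)) (mink v p) t := by
  simp only [mink_add_smul_left]
  simpa using (((hasDerivAt_id t).mul_const (mink v p)).const_add (mink e p)).ofReal_comp

lemma Dv_Dv_intertwiner (v w p e : Fin 4 → ℝ) (h : mink e p ≠ 0) :
    Dv v (Dv v (intertwiner w p)) e =
      intertwiner w p e * ((-(mink v (phaseGrad w p e) : ℂ) ^ 2 +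
        2 * I * mink v (phaseGrad w p e) * mink v p * mink e p) / (mink e p : ℂ) ^ 4) := by
  set K := mink v (phaseGrad w p e)
  have hC : (mink e p : ℂ) ≠ 0 := by exact_mod_cast h
  have hline : (fun t : ℝ => Dv v (intertwiner w p) (e + t • v)) =ᶠ[𝓝 0]
      fun t => intertwiner w p (e + t • v) * (-I * K / (mink (e + t • v) p : ℂ) ^ 2) := by
    have hcont : Continuous fun t : ℝ => mink (e + t • v) p := by
      simp only [mink_add_smul_left]
      fun_prop
    filter_upwards [hcont.continuousAt.eventually_ne (by simpa using h)] with t ht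
    rw [Dv_intertwiner v w p _ ht, mink_phaseGrad_add_smul]
  have hderiv := (hasDerivAt_intertwiner_line v w p e 0 (by simpa using h)).fun_mul
    ((hasDerivAt_const (0 : ℝ) (-I * K)).fun_div ((hasDerivAt_mink_line v e p 0).fun_pow 2)
      (by simpa using hC))
  rw [Dv, hline.deriv_eq, hderiv.deriv]
  simp only [zero_smul, add_zero]
  field_simp
  ring_nf
  simp only [I_sq]
  ring

lemma box_intertwiner (w p e : Fin 4 → ℝ) (h : mink e p ≠ 0) :
    box (intertwiner w p) e =
      intertwiner w p e * ((-(mink (phaseGrad w p e) (phaseGrad w p e) : ℂ) +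
        2 * I * mink (phaseGrad w p e) p * mink e p) / (mink e p : ℂ) ^ 4) := by
  simp only [box, Dv_Dv_intertwiner _ w p e h]
  rw [← mink_bvec_sum (phaseGrad w p e), ← mink_bvec_sum (phaseGrad w p e) p]
  push_cast
  ring

theorem intertwiner_wave_equations_general (κ : ℝ) (p w : Fin 4 → ℝ)
    (hpp : mink p p = 0) (hpw : mink p w = 0) (hww : mink w w = -κ ^ 2) :
    ∀ e : Fin 4 → ℝ, mink e p ≠ 0 →
      Dv p (fun e' => Complex.exp (-Complex.I * (mink e' w : ℝ) / (mink e' p : ℝ))) e = 0 ∧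
      ((mink e p : ℝ) : ℂ) ^ 2 *
          box (fun e' => Complex.exp (-Complex.I * (mink e' w : ℝ) / (mink e' p : ℝ))) e =
        (κ : ℂ) ^ 2 *
          Complex.exp (-Complex.I * (mink e w : ℝ) / (mink e p : ℝ)) := by
  intro e he
  set G := phaseGrad w p e
  have hpG : mink p G = 0 := by
    rw [mink_phaseGrad, hpw, hpp]
    ring
  have hGG : mink G G = -κ ^ 2 * mink e p ^ 2 := by
    rw [mink_phaseGrad, mink_comm G w, mink_comm G p, hpG, mink_phaseGrad, hww, mink_comm w p, hpw]
    ring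
  refine ⟨?_, ?_⟩
  · change Dv p (intertwiner w p) e = 0
    simp [Dv_intertwiner p w p e he, G, hpG]
  · change _ * box (intertwiner w p) e = _ * intertwiner w p e
    have hC : (mink e p : ℂ) ≠ 0 := by exact_mod_cast he
    rw [box_intertwiner w p e he, mink_comm G p, hpG, hGG]
    field_simp
    push_cast
    ring

/-- The intertwiner identities `(p∂_e)ũ = 0` and `((ep)²□_e − κ²)ũ = 0` proved for
Proposition 2.2. -/
theorem intertwiner_wave_equations (κ : ℝ) (hκ : 0 ≤ κ) (p w : Fin 4 → ℝ)
    (hpp : mink p p = 0) (hpw : mink p w = 0) (hww : mink w w = -κ ^ 2) :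
    ∀ e : Fin 4 → ℝ, mink e p ≠ 0 →
      Dv p (fun e' => Complex.exp (-Complex.I * (mink e' w : ℝ) / (mink e' p : ℝ))) e = 0 ∧
      ((mink e p : ℝ) : ℂ) ^ 2 *
          box (fun e' => Complex.exp (-Complex.I * (mink e' w : ℝ) / (mink e' p : ℝ))) e =
        (κ : ℂ) ^ 2 *
          Complex.exp (-Complex.I * (mink e w : ℝ) / (mink e p : ℝ)) :=
  intertwiner_wave_equations_general κ p w hpp hpw hww
end
end

section
/- Let p, w, v ∈ ℝ⁴ with ⟨p,p⟩ = 0 and ⟨p,w⟩ = 0. On Ω = {e ∈ ℝ⁴ : ⟨e,p⟩ ≠ 0} define ũ(e) := exp(−i·⟨e,w⟩/⟨e,p⟩) and h(e) := ⟨v,w⟩ − ⟨e,w⟩·⟨v,p⟩/⟨e,p⟩. Then for every r ∈ ℕ and every e ∈ Ω: r·⟨v,p⟩·h(e)^r·ũ(e) + ⟨e,p⟩·D_v( h^r·ũ )(e) = −i·h(e)^{r+1}·ũ(e). (The momentum-space recursion −i(vᵗJ_e(p)E_p(k))^{r+1}ũ = (r(vp)+(ep)(v∂_e))(vᵗJ_e(p)E_p(k))^r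 ũ proved for Proposition 2.3, which defines the rank-(r+1) intertwiners from the rank-r ones.) -/
noncomputable section

/-- The intertwiner `ũ(e) = exp(−i⟨e,w⟩/⟨e,p⟩)`. -/
def util (p w : Fin 4 → ℝ) (e : Fin 4 → ℝ) : ℂ :=
  Complex.exp (-Complex.I * ((mink e w : ℝ) : ℂ) / ((mink e p : ℝ) : ℂ))

/-- `h(e) = ⟨v,w⟩ − ⟨e,w⟩⟨v,p⟩/⟨e,p⟩ = ⟨v, J_e(p)w⟩`. -/
def hfun (p w v : Fin 4 → ℝ) (e : Fin 4 → ℝ) : ℝ :=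
  mink v w - mink e w * mink v p / mink e p

/-! Both `h` and `ũ` are functions of the ratio `q(e) = ⟨e,w⟩/⟨e,p⟩`: `h = ⟨v,w⟩ − ⟨v,p⟩ q` and
`ũ = exp(−i q)`. Along the line `e + t v` the quotient rule gives `D_v q = h/⟨e,p⟩`, hence
`⟨e,p⟩ D_v h = −⟨v,p⟩ h` and `⟨e,p⟩ D_v ũ = −i h ũ`, and the recursion is the product rule
for `h^r ũ`. -/

lemma mink_add_smul (e v x : Fin 4 → ℝ) (t : ℝ) :
    mink (e + t • v) x = mink e x + t * mink v x := by
  simp only [mink, Pi.add_apply, Pi.smul_apply, smul_eq_mul]; ring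

lemma hasDerivAt_mink_add_smul (e v x : Fin 4 → ℝ) (t : ℝ) :
    HasDerivAt (fun s : ℝ => mink (e + s • v) x) (mink v x) t := by
  rw [funext fun s => mink_add_smul e v x s]
  simpa using ((hasDerivAt_id t).mul_const (mink v x)).const_add (mink e x)

lemma hasDerivAt_mink_div_mink_add_smul (p w v e : Fin 4 → ℝ) (he : mink e p ≠ 0) :
    HasDerivAt (fun t : ℝ => mink (e + t • v) w / mink (e + t • v) p)
      (hfun p w v e / mink e p) 0 := by
  have hp : mink (e + (0 : ℝ) • v) p ≠ 0 := by rwa [zero_smul, add_zero]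
  refine ((hasDerivAt_mink_add_smul e v w 0).div
    (hasDerivAt_mink_add_smul e v p 0) hp).congr_deriv ?_
  simp only [zero_smul, add_zero, hfun]
  field_simp

lemma hfun_eq_sub_mul_div (p w v e : Fin 4 → ℝ) :
    hfun p w v e = mink v w - mink v p * (mink e w / mink e p) := by
  rw [hfun, mul_comm (mink e w), mul_div_assoc]

lemma util_eq_exp_div (p w e : Fin 4 → ℝ) :
    util p w e = Complex.exp (-Complex.I * ((mink e w / mink e p : ℝ) : ℂ)) := by
  rw [util, Complex.ofReal_div, mul_div_assoc]

lemma hasDerivAt_hfun_add_smul (p w v e : Fin 4 → ℝ) (he : mink e p ≠ 0) :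
    HasDerivAt (fun t : ℝ => hfun p w v (e + t • v))
      (-(mink v p * hfun p w v e / mink e p)) 0 := by
  rw [funext fun t => hfun_eq_sub_mul_div p w v (e + t • v)]
  exact (((hasDerivAt_mink_div_mink_add_smul p w v e he).const_mul (mink v p)).const_sub
    (mink v w)).congr_deriv (by rw [mul_div_assoc])

lemma hasDerivAt_util_add_smul (p w v e : Fin 4 → ℝ) (he : mink e p ≠ 0) :
    HasDerivAt (fun t : ℝ => util p w (e + t • v))
      (util p w e * (-Complex.I * ((hfun p w v e / mink e p : ℝ) : ℂ))) 0 := by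
  rw [funext fun t => util_eq_exp_div p w (e + t • v), util_eq_exp_div]
  exact (((hasDerivAt_mink_div_mink_add_smul p w v e he).ofReal_comp).const_mul
    (-Complex.I)).cexp.congr_deriv (by simp)

theorem intertwiner_recursion_general (p w v : Fin 4 → ℝ) :
    ∀ (r : ℕ) (e : Fin 4 → ℝ), mink e p ≠ 0 →
      (r : ℂ) * ((mink v p : ℝ) : ℂ) * ((hfun p w v e : ℝ) : ℂ) ^ r * util p w e +
          ((mink e p : ℝ) : ℂ) *
            Dv v (fun e' => ((hfun p w v e' : ℝ) : ℂ) ^ r * util p w e') e =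
        -Complex.I * ((hfun p w v e : ℝ) : ℂ) ^ (r + 1) * util p w e := by
  intro r e he
  have hDv := ((((hasDerivAt_hfun_add_smul p w v e he).ofReal_comp).fun_pow r).fun_mul
    (hasDerivAt_util_add_smul p w v e he)).deriv
  simp only [zero_smul, add_zero] at hDv
  rw [Dv, hDv]
  have he' : ((mink e p : ℝ) : ℂ) ≠ 0 := Complex.ofReal_ne_zero.2 he
  rcases r with _ | n
  · push_cast; field_simp; ring
  · push_cast; field_simp; ring

/-- The momentum-space recursion proved for Proposition 2.3, defining the rank-(r+1)
intertwiners from the rank-r ones. -/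
theorem intertwiner_recursion (p w v : Fin 4 → ℝ) (hpp : mink p p = 0)
    (hpw : mink p w = 0) :
    ∀ (r : ℕ) (e : Fin 4 → ℝ), mink e p ≠ 0 →
      (r : ℂ) * ((mink v p : ℝ) : ℂ) * ((hfun p w v e : ℝ) : ℂ) ^ r * util p w e +
          ((mink e p : ℝ) : ℂ) *
            Dv v (fun e' => ((hfun p w v e' : ℝ) : ℂ) ^ r * util p w e') e =
        -Complex.I * ((hfun p w v e : ℝ) : ℂ) ^ (r + 1) * util p w e :=
  intertwiner_recursion_general p w v
end
end

section
/- Let L₁, L₂, L₃, K₁, K₂, K₃ be the 4×4 real matrices acting on x = (x⁰,x¹,x²,x³) by L₁x = (0,0,−x³,x²), L₂x = (0,x³,0,−x¹), L₃x = (0,−x²,x¹,0), K₁x = (x¹,x⁰,0,0), K₂x = (x²,0,x⁰,0), K₃x = (x³,0,0,x⁰) (rotation and boost generators of so(1,3)). Set Q₁ := L₁ + K₂ and Q₂ := L₂ − K₁. Then: (i) for all τ ∈ ℝ, exp(τK₃)·L₁·exp(−τK₃) = cosh τ · L₁ + sinh τ · K₂ and exp(τK₃)·L₂·exp(−τK₃)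 = cosh τ · L₂ − sinh τ · K₁; (ii) lim_{τ→∞} 2e^{−τ}·exp(τK₃)·L_i·exp(−τK₃) = Q_i for i = 1,2 (limit in the space of 4×4 real matrices); (iii) Q₁·p₀ = Q₂·p₀ = L₃·p₀ = 0 for p₀ = (1,0,0,1); and (iv) [Q₁,Q₂] = 0, [L₃,Q₁] = Q₂, [L₃,Q₂] = −Q₁, i.e. Q₁, Q₂, L₃ span a Lie algebra with the commutation relations of the Euclidean group E(2). (The contraction of the massive little group SO(3) to the massless little group E(2) inside SO(1,3), Appendix A.) -/
/-!
The boost `K₃` acts on the plane spanned by `L₁, K₂` (and on the one spanned by `L₂, -K₁`)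
through brackets `[K₃, L] = M`, `[K₃, M] = L`, so conjugating by `exp (τ K₃)` moves `L` along the
hyperbola `cosh τ • L + sinh τ • M`. Since `2 e^{-τ} cosh τ` and `2 e^{-τ} sinh τ` both tend to `1`,
the rescaled conjugates tend to `L + M`. Everything else is a finite computation with the
generators.
-/

open Filter Topology Real

section Conjugation

variable {𝔸 : Type*} [NormedRing 𝔸] [NormedAlgebra ℝ 𝔸] [CompleteSpace 𝔸]

theorem exp_smul_mul_mul_exp_neg_smul_eq_cosh_smul_add_sinh_smul {K L M : 𝔸}
    (hL : K * L - L * K = M) (hM : K * M - M * K = L) (τ : ℝ) :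
    NormedSpace.exp (τ • K) * L * NormedSpace.exp ((-τ) • K) = cosh τ • L + sinh τ • M := by
  let C : ℝ → 𝔸 := fun t => cosh t • L + sinh t • M
  have hC : ∀ t, HasDerivAt C (K * C t - C t * K) t := by
    intro t
    have hKC : K * C t - C t * K = sinh t • L + cosh t • M := by
      calc K * C t - C t * K = cosh t • (K * L - L * K) + sinh t • (K * M - M * K) := by
            simp only [C, mul_add, add_mul, mul_smul_comm, smul_mul_assoc]; module
        _ = sinh t • L + cosh t • M := by rw [hL, hM, add_comm]
    rw [hKC]
    exact ((hasDerivAt_cosh t).smul_const L).add ((hasDerivAt_sinh t).smul_const M)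
  -- `C` solves `C' = [K, C]`, which is exactly what makes this conjugate of it constant.
  let F : ℝ → 𝔸 := fun t => NormedSpace.exp (t • -K) * C t * NormedSpace.exp (t • K)
  have hF : ∀ t, HasDerivAt F 0 t := by
    intro t
    convert ((hasDerivAt_exp_smul_const (-K) t).fun_mul (hC t)).fun_mul
      (hasDerivAt_exp_smul_const' K t) using 1
    noncomm_ring
  have hF_const : F τ = F 0 :=
    is_const_of_deriv_eq_zero (fun t => (hF t).differentiableAt) (fun t => (hF t).deriv) τ 0
  have hF_zero : F 0 = L := by simp [F, C]
  let : NormedAlgebra ℚ 𝔸 := NormedAlgebra.restrictScalars ℚ ℝ 𝔸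
  have hinv : ∀ x : 𝔸, NormedSpace.exp x * NormedSpace.exp (-x) = 1 := fun x => by
    rw [← NormedSpace.exp_add_of_commute (Commute.refl x).neg_right, add_neg_cancel,
      NormedSpace.exp_zero]
  calc NormedSpace.exp (τ • K) * L * NormedSpace.exp ((-τ) • K)
      = NormedSpace.exp (τ • K) * F τ * NormedSpace.exp ((-τ) • K) := by rw [hF_const, hF_zero]
    _ = C τ := by
      simp only [F, neg_smul, smul_neg, mul_assoc, hinv, mul_one]
      simp only [← mul_assoc, hinv, one_mul]

theorem Matrix.exp_smul_mul_mul_exp_neg_smul_eq_cosh_smul_add_sinh_smul {n : Type*} [Fintype n]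
    [DecidableEq n] {K L M : Matrix n n ℝ} (hL : K * L - L * K = M) (hM : K * M - M * K = L)
    (τ : ℝ) :
    NormedSpace.exp (τ • K) * L * NormedSpace.exp ((-τ) • K) = cosh τ • L + sinh τ • M := by
  let _ : NormedRing (Matrix n n ℝ) := Matrix.linftyOpNormedRing
  let _ : NormedAlgebra ℝ (Matrix n n ℝ) := Matrix.linftyOpNormedAlgebra
  exact _root_.exp_smul_mul_mul_exp_neg_smul_eq_cosh_smul_add_sinh_smul hL hM τ

end Conjugation

theorem tendsto_two_mul_exp_neg_mul_cosh_atTop :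
    Tendsto (fun τ => 2 * exp (-τ) * cosh τ) atTop (𝓝 1) := by
  have h : Tendsto (fun τ => 1 + exp (-τ) ^ 2) atTop (𝓝 (1 + 0 ^ 2)) :=
    (tendsto_exp_neg_atTop_nhds_zero.pow 2).const_add 1
  convert h using 2 with τ
  · rw [cosh_eq, exp_neg]; field_simp
  · norm_num

theorem tendsto_two_mul_exp_neg_mul_sinh_atTop :
    Tendsto (fun τ => 2 * exp (-τ) * sinh τ) atTop (𝓝 1) := by
  have h : Tendsto (fun τ => 1 - exp (-τ) ^ 2) atTop (𝓝 (1 - 0 ^ 2)) :=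
    (tendsto_exp_neg_atTop_nhds_zero.pow 2).const_sub 1
  convert h using 2 with τ
  · rw [sinh_eq, exp_neg]; field_simp
  · norm_num

theorem tendsto_two_mul_exp_neg_smul_cosh_smul_add_sinh_smul {E : Type*} [AddCommGroup E]
    [Module ℝ E] [TopologicalSpace E] [ContinuousAdd E] [ContinuousSMul ℝ E] (L M : E) :
    Tendsto (fun τ => (2 * exp (-τ)) • (cosh τ • L + sinh τ • M)) atTop (𝓝 (L + M)) := by
  simp only [smul_add, smul_smul]
  simpa using (tendsto_two_mul_exp_neg_mul_cosh_atTop.smul_const L).add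
    (tendsto_two_mul_exp_neg_mul_sinh_atTop.smul_const M)

/-- The contraction of the massive little group SO(3) to the massless little group E(2)
inside SO(1,3) (Appendix A). -/
theorem so3_contraction_to_e2
    (L₁ L₂ L₃ K₁ K₂ K₃ : Matrix (Fin 4) (Fin 4) ℝ)
    (hL₁ : ∀ x : Fin 4 → ℝ, L₁.mulVec x = ![0, 0, -x 3, x 2])
    (hL₂ : ∀ x : Fin 4 → ℝ, L₂.mulVec x = ![0, x 3, 0, -x 1])
    (hL₃ : ∀ x : Fin 4 → ℝ, L₃.mulVec x = ![0, -x 2, x 1, 0])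
    (hK₁ : ∀ x : Fin 4 → ℝ, K₁.mulVec x = ![x 1, x 0, 0, 0])
    (hK₂ : ∀ x : Fin 4 → ℝ, K₂.mulVec x = ![x 2, 0, x 0, 0])
    (hK₃ : ∀ x : Fin 4 → ℝ, K₃.mulVec x = ![x 3, 0, 0, x 0]) :
    -- (i) conjugation of the rotation generators by the boost exp(τK₃)
    (∀ τ : ℝ,
      NormedSpace.exp (τ • K₃) * L₁ * NormedSpace.exp ((-τ) • K₃) =
          Real.cosh τ • L₁ + Real.sinh τ • K₂ ∧
        NormedSpace.exp (τ • K₃) * L₂ * NormedSpace.exp ((-τ) • K₃) =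
          Real.cosh τ • L₂ - Real.sinh τ • K₁) ∧
    -- (ii) the contraction limits 2e^{−τ} exp(τK₃) L_i exp(−τK₃) → Q_i
    Tendsto
        (fun τ : ℝ =>
          (2 * Real.exp (-τ)) •
            (NormedSpace.exp (τ • K₃) * L₁ * NormedSpace.exp ((-τ) • K₃)))
        atTop (nhds (L₁ + K₂)) ∧
    Tendsto
        (fun τ : ℝ =>
          (2 * Real.exp (-τ)) •
            (NormedSpace.exp (τ • K₃) * L₂ * NormedSpace.exp ((-τ) • K₃)))
        atTop (nhds (L₂ - K₁)) ∧
    -- (iii) Q₁, Q₂, L₃ stabilize the reference vector p₀ = (1,0,0,1)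
    ((L₁ + K₂).mulVec ![1, 0, 0, 1] = 0 ∧ (L₂ - K₁).mulVec ![1, 0, 0, 1] = 0 ∧
      L₃.mulVec ![1, 0, 0, 1] = 0) ∧
    -- (iv) the E(2) commutation relations
    ((L₁ + K₂) * (L₂ - K₁) - (L₂ - K₁) * (L₁ + K₂) = 0 ∧
      L₃ * (L₁ + K₂) - (L₁ + K₂) * L₃ = L₂ - K₁ ∧
      L₃ * (L₂ - K₁) - (L₂ - K₁) * L₃ = -(L₁ + K₂)) := by
  obtain ⟨⟨hK₃L₁, hK₃K₂, hK₃L₂, hK₃K₁⟩, hstab, hE₂⟩ :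
      (K₃ * L₁ - L₁ * K₃ = K₂ ∧ K₃ * K₂ - K₂ * K₃ = L₁ ∧
        K₃ * L₂ - L₂ * K₃ = -K₁ ∧ K₃ * -K₁ - -K₁ * K₃ = L₂) ∧
      ((L₁ + K₂).mulVec ![1, 0, 0, 1] = 0 ∧ (L₂ - K₁).mulVec ![1, 0, 0, 1] = 0 ∧
        L₃.mulVec ![1, 0, 0, 1] = 0) ∧
      ((L₁ + K₂) * (L₂ - K₁) - (L₂ - K₁) * (L₁ + K₂) = 0 ∧
        L₃ * (L₁ + K₂) - (L₁ + K₂) * L₃ = L₂ - K₁ ∧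
        L₃ * (L₂ - K₁) - (L₂ - K₁) * L₃ = -(L₁ + K₂)) := by
    simp only [Matrix.ext_iff_mulVec, ← Matrix.mulVec_mulVec, Matrix.sub_mulVec,
      Matrix.add_mulVec, Matrix.neg_mulVec, Matrix.mulVec_add, Matrix.mulVec_sub,
      Matrix.zero_mulVec, hL₁, hL₂, hL₃, hK₁, hK₂, hK₃]
    refine ⟨⟨?_, ?_, ?_, ?_⟩, ⟨?_, ?_, ?_⟩, ?_, ?_, ?_⟩ <;> intros <;> ext i <;> fin_cases i <;>
      simp <;> ring
  have conj₁ (τ : ℝ) : NormedSpace.exp (τ • K₃) * L₁ * NormedSpace.exp ((-τ) • K₃) =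
      cosh τ • L₁ + sinh τ • K₂ :=
    Matrix.exp_smul_mul_mul_exp_neg_smul_eq_cosh_smul_add_sinh_smul hK₃L₁ hK₃K₂ τ
  have conj₂ (τ : ℝ) : NormedSpace.exp (τ • K₃) * L₂ * NormedSpace.exp ((-τ) • K₃) =
      cosh τ • L₂ - sinh τ • K₁ := by
    rw [Matrix.exp_smul_mul_mul_exp_neg_smul_eq_cosh_smul_add_sinh_smul hK₃L₂ hK₃K₁, smul_neg,
      sub_eq_add_neg]
  refine ⟨fun τ => ⟨conj₁ τ, conj₂ τ⟩, ?_, ?_, hstab, hE₂⟩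
  · simpa only [conj₁] using tendsto_two_mul_exp_neg_smul_cosh_smul_add_sinh_smul L₁ K₂
  · simpa only [conj₂, sub_eq_add_neg, smul_neg] using
      tendsto_two_mul_exp_neg_smul_cosh_smul_add_sinh_smul L₂ (-K₁)
end
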